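/- (Lipschitz dependence of the iterates on x.) Each iterate φ^j(x) belongs to F_σ, and for every j ≥ 0 and all x₁, x₂ ∈ X one has ‖φ^j(x₁) − φ^j(x₂)‖_σ ≤ (1/(1−κ)) ‖x₁ − x₂‖. -/

import Mathlib

open MeasureTheory

noncomputable section

variable {X Y : Type*} [NormedAddCommGroup X] [NormedSpace ℝ X] [CompleteSpace X]
  [NormedAddCommGroup Y] [NormedSpace ℝ Y] [CompleteSpace Y]

/-- The weighted sup-norm `‖φ‖_σ = sup_{t ≥ 0} e^{-σ t} ‖φ t‖` on `[0,∞)`. -/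
noncomputable def normSigmaPos {E : Type*} [NormedAddCommGroup E] (σ : ℝ) (φ : ℝ → E) : ℝ :=
  sSup {r : ℝ | ∃ t : ℝ, 0 ≤ t ∧ r = Real.exp (-(σ * t)) * ‖φ t‖}

/-- Membership in the Banach space `F_σ` of continuous functions on `[0,∞)` with
finite weighted sup-norm. -/
def memFsigma {E : Type*} [NormedAddCommGroup E] (σ : ℝ) (φ : ℝ → E) : Prop :=
  ContinuousOn φ (Set.Ici 0) ∧
    BddAbove {r : ℝ | ∃ t : ℝ, 0 ≤ t ∧ r = Real.exp (-(σ * t)) * ‖φ t‖}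

/-- The Lyapunov–Perron map `T_{z₀}(φ, x)` for the stable foliation: the `X`-component is
`e^{tA} x + ∫₀^t e^{(t−s)A} [F(φ(s)+z(s,z₀)) − F(z(s,z₀))] ds` and the `Y`-component is
`−∫_t^∞ e^{(t−s)B} [G(φ(s)+z(s,z₀)) − G(z(s,z₀))] ds`. -/
noncomputable def Tmap (A : X →L[ℝ] X) (B : Y →L[ℝ] Y)
    (F : X × Y → X) (G : X × Y → Y) (z : ℝ → X × Y → X × Y) (z₀ : X × Y)
    (φ : ℝ → X × Y) (x : X) (t : ℝ) : X × Y :=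
  (NormedSpace.exp (t • A) x +
      ∫ s in (0:ℝ)..t, NormedSpace.exp ((t - s) • A) (F (φ s + z s z₀) - F (z s z₀)),
    -∫ s in Set.Ioi t, NormedSpace.exp ((t - s) • B) (G (φ s + z s z₀) - G (z s z₀)))

/-- The iterates `φ⁰(x)(t) = (e^{αt}(x − x₀), 0)`, `φ^{j+1}(x) = T_{z₀}(φ^j(x), x)`. -/
noncomputable def phiIter (A : X →L[ℝ] X) (B : Y →L[ℝ] Y)
    (F : X × Y → X) (G : X × Y → Y) (z : ℝ → X × Y → X × Y) (z₀ : X × Y) (α : ℝ) :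
    ℕ → X → ℝ → X × Y
  | 0 => fun x t => (Real.exp (α * t) • (x - z₀.1), (0 : Y))
  | j + 1 => fun x => Tmap A B F G z z₀ (phiIter A B F G z z₀ α j x) x

/-!
For `φ ∈ F_σ` both components of `T_{z₀}(φ, x)` are variation-of-constants integrals of forcing
terms of size at most `δ ‖φ‖_σ e^{σ s}`. The dichotomy bounds on `e^{tA}` and `e^{-tB}` turn these
into bounds `δ / (σ - α)` and `δ / (β - σ)` times `‖φ‖_σ e^{σ t}`, so `T_{z₀}` maps `F_σ` into
itself and `‖T(φ₁, x₁) - T(φ₂, x₂)‖_σ ≤ ‖x₁ - x₂‖ + κ ‖φ₁ - φ₂‖_σ`. Starting from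
`‖φ⁰(x₁) - φ⁰(x₂)‖_σ ≤ ‖x₁ - x₂‖`, induction on `j` keeps the bound `‖x₁ - x₂‖ / (1 - κ)`,
a fixed point of `N ↦ ‖x₁ - x₂‖ + κ N`.
-/

open Set Real
open scoped NNReal

section OperatorExponential

variable {E : Type*} [NormedAddCommGroup E] [NormedSpace ℝ E] [CompleteSpace E] (A : E →L[ℝ] E)

theorem exp_sub_smul_apply (t s : ℝ) (v : E) :
    NormedSpace.exp ((t - s) • A) v = NormedSpace.exp (t • A) (NormedSpace.exp ((-s) • A) v) := by
  -- `exp_add_of_commute` is stated for `ℚ`-algebras.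
  let _ : NormedAlgebra ℚ (E →L[ℝ] E) := .restrictScalars ℚ ℝ _
  have hcomm : Commute (t • A) ((-s) • A) := ((Commute.refl A).smul_left t).smul_right (-s)
  rw [sub_eq_add_neg, add_smul, NormedSpace.exp_add_of_commute hcomm]
  rfl

theorem continuous_exp_smul : Continuous fun t : ℝ => NormedSpace.exp (t • A) :=
  (differentiable_exp_smul_const ℝ A).continuous

variable {A}

theorem ContinuousOn.exp_sub_smul_apply {g : ℝ → E} {S : Set ℝ} (hg : ContinuousOn g S) (t : ℝ) :
    ContinuousOn (fun s => NormedSpace.exp ((t - s) • A) (g s)) S :=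
  ((continuous_exp_smul A).comp (continuous_const.sub continuous_id)).continuousOn.clm_apply hg

end OperatorExponential

section WeightedNorm

variable {E : Type*} [NormedAddCommGroup E] {σ K : ℝ} {φ ψ : ℝ → E}

theorem mem_upperBounds_of_norm_le_mul_exp (h : ∀ t, 0 ≤ t → ‖φ t‖ ≤ K * exp (σ * t)) :
    K ∈ upperBounds {r : ℝ | ∃ t : ℝ, 0 ≤ t ∧ r = exp (-(σ * t)) * ‖φ t‖} := by
  rintro r ⟨t, ht, rfl⟩
  calc exp (-(σ * t)) * ‖φ t‖ ≤ exp (-(σ * t)) * (K * exp (σ * t)) := by gcongr; exact h t ht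
    _ = K := by rw [mul_left_comm, ← exp_add, neg_add_cancel, exp_zero, mul_one]

theorem nonneg_of_norm_le_mul_exp (h : ∀ t, 0 ≤ t → ‖φ t‖ ≤ K * exp (σ * t)) : 0 ≤ K := by
  simpa using (norm_nonneg _).trans (h 0 le_rfl)

theorem normSigmaPos_nonneg (σ : ℝ) (φ : ℝ → E) : 0 ≤ normSigmaPos σ φ :=
  Real.sSup_nonneg fun _ ⟨_, _, hr⟩ => hr ▸ by positivity

theorem normSigmaPos_le (hK : 0 ≤ K) (h : ∀ t, 0 ≤ t → ‖φ t‖ ≤ K * exp (σ * t)) :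
    normSigmaPos σ φ ≤ K :=
  Real.sSup_le (mem_upperBounds_of_norm_le_mul_exp h) hK

theorem memFsigma_of_norm_le (hc : ContinuousOn φ (Ici 0))
    (h : ∀ t, 0 ≤ t → ‖φ t‖ ≤ K * exp (σ * t)) : memFsigma σ φ :=
  ⟨hc, K, mem_upperBounds_of_norm_le_mul_exp h⟩

theorem memFsigma.norm_le (hφ : memFsigma σ φ) {t : ℝ} (ht : 0 ≤ t) :
    ‖φ t‖ ≤ normSigmaPos σ φ * exp (σ * t) := by
  have h : exp (-(σ * t)) * ‖φ t‖ ≤ normSigmaPos σ φ := le_csSup hφ.2 ⟨t, ht, rfl⟩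
  rwa [exp_neg, inv_mul_le_iff₀ (exp_pos _), mul_comm] at h

theorem memFsigma.sub (hφ : memFsigma σ φ) (hψ : memFsigma σ ψ) :
    memFsigma σ (fun t => φ t - ψ t) :=
  memFsigma_of_norm_le (hφ.1.sub hψ.1) fun _ ht =>
    (norm_sub_le _ _).trans <| (add_le_add (hφ.norm_le ht) (hψ.norm_le ht)).trans_eq
      (add_mul _ _ _).symm

end WeightedNorm

theorem integral_exp_mul {k : ℝ} (hk : k ≠ 0) (t : ℝ) :
    ∫ s in (0:ℝ)..t, exp (k * s) = (exp (k * t) - 1) / k := by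
  simp [intervalIntegral.integral_comp_mul_left (fun s => exp s) hk]
  ring

section DecayEstimates

variable {E : Type*} [NormedAddCommGroup E] [NormedSpace ℝ E] {α β σ c : ℝ} {g : ℝ → E}

theorem intervalIntegrable_exp_sub_smul_apply [CompleteSpace E] (A : E →L[ℝ] E)
    (hgc : ContinuousOn g (Ici 0)) {t : ℝ} (ht : 0 ≤ t) :
    IntervalIntegrable (fun s => NormedSpace.exp ((t - s) • A) (g s)) volume 0 t :=
  ((hgc.mono Icc_subset_Ici_self).exp_sub_smul_apply t).intervalIntegrable_of_Icc ht

theorem norm_intervalIntegral_exp_sub_smul_le {A : E →L[ℝ] E}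
    (hA : ∀ t : ℝ, 0 ≤ t → ‖NormedSpace.exp (t • A)‖ ≤ exp (α * t)) (hασ : α < σ)
    (hg : ∀ s, 0 ≤ s → ‖g s‖ ≤ c * exp (σ * s))
    {t : ℝ} (ht : 0 ≤ t) :
    ‖∫ s in (0:ℝ)..t, NormedSpace.exp ((t - s) • A) (g s)‖ ≤ c / (σ - α) * exp (σ * t) := by
  have hk : σ - α ≠ 0 := by linarith
  have hc := nonneg_of_norm_le_mul_exp hg
  have hpt : ∀ s ∈ Icc 0 t,
      ‖NormedSpace.exp ((t - s) • A) (g s)‖ ≤ c * exp (α * t) * exp ((σ - α) * s) := by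
    rintro s ⟨hs₀, hst⟩
    calc ‖NormedSpace.exp ((t - s) • A) (g s)‖
        ≤ exp (α * (t - s)) * (c * exp (σ * s)) :=
          (ContinuousLinearMap.le_opNorm _ _).trans <|
            mul_le_mul (hA _ (by linarith)) (hg s hs₀) (norm_nonneg _) (exp_pos _).le
      _ = c * exp (α * t) * exp ((σ - α) * s) := by
          rw [mul_left_comm, mul_assoc, ← exp_add, ← exp_add]; ring_nf
  calc ‖∫ s in (0:ℝ)..t, NormedSpace.exp ((t - s) • A) (g s)‖
      ≤ ∫ s in (0:ℝ)..t, c * exp (α * t) * exp ((σ - α) * s) :=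
        intervalIntegral.norm_integral_le_of_norm_le ht
          (ae_of_all _ fun s hs => hpt s ⟨hs.1.le, hs.2⟩)
          (Continuous.intervalIntegrable (by fun_prop) _ _)
    _ = c * exp (α * t) * ((exp ((σ - α) * t) - 1) / (σ - α)) := by
        rw [intervalIntegral.integral_const_mul, integral_exp_mul hk]
    _ ≤ c * exp (α * t) * (exp ((σ - α) * t) / (σ - α)) := by
        gcongr
        linarith
    _ = c / (σ - α) * exp (σ * t) := by
        rw [mul_div_assoc', mul_assoc, ← exp_add]; ring_nf

theorem norm_exp_sub_smul_apply_le_of_le {B : E →L[ℝ] E}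
    (hB : ∀ t : ℝ, 0 ≤ t → ‖NormedSpace.exp ((-t) • B)‖ ≤ exp (-(β * t)))
    (hg : ∀ s, 0 ≤ s → ‖g s‖ ≤ c * exp (σ * s)) {t s : ℝ} (ht : 0 ≤ t) (hts : t ≤ s) :
    ‖NormedSpace.exp ((t - s) • B) (g s)‖ ≤ c * exp (β * t) * exp ((σ - β) * s) := by
  have hB' := hB (s - t) (by linarith)
  rw [neg_sub] at hB'
  calc ‖NormedSpace.exp ((t - s) • B) (g s)‖ ≤ exp (-(β * (s - t))) * (c * exp (σ * s)) :=
        (ContinuousLinearMap.le_opNorm _ _).trans <|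
          mul_le_mul hB' (hg s (ht.trans hts)) (norm_nonneg _) (exp_pos _).le
    _ = c * exp (β * t) * exp ((σ - β) * s) := by
        rw [mul_left_comm, mul_assoc, ← exp_add, ← exp_add]; ring_nf

theorem integrableOn_Ioi_exp_sub_smul_apply [CompleteSpace E] {B : E →L[ℝ] E}
    (hB : ∀ t : ℝ, 0 ≤ t → ‖NormedSpace.exp ((-t) • B)‖ ≤ exp (-(β * t))) (hσβ : σ < β)
    (hgc : ContinuousOn g (Ici 0)) (hg : ∀ s, 0 ≤ s → ‖g s‖ ≤ c * exp (σ * s))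
    {t : ℝ} (ht : 0 ≤ t) :
    IntegrableOn (fun s => NormedSpace.exp ((t - s) • B) (g s)) (Ioi t) :=
  Integrable.mono' ((integrableOn_exp_mul_Ioi (by linarith) t).const_mul _)
    (((hgc.mono fun _ hs => ht.trans (le_of_lt hs)).exp_sub_smul_apply t).aestronglyMeasurable
      measurableSet_Ioi)
    ((ae_restrict_mem measurableSet_Ioi).mono fun s hs =>
      norm_exp_sub_smul_apply_le_of_le hB hg ht (le_of_lt hs))

theorem norm_setIntegral_Ioi_exp_sub_smul_le {B : E →L[ℝ] E}
    (hB : ∀ t : ℝ, 0 ≤ t → ‖NormedSpace.exp ((-t) • B)‖ ≤ exp (-(β * t))) (hσβ : σ < β)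
    (hg : ∀ s, 0 ≤ s → ‖g s‖ ≤ c * exp (σ * s)) {t : ℝ} (ht : 0 ≤ t) :
    ‖∫ s in Ioi t, NormedSpace.exp ((t - s) • B) (g s)‖ ≤ c / (β - σ) * exp (σ * t) := by
  calc ‖∫ s in Ioi t, NormedSpace.exp ((t - s) • B) (g s)‖
      ≤ ∫ s in Ioi t, c * exp (β * t) * exp ((σ - β) * s) :=
        norm_integral_le_of_norm_le ((integrableOn_exp_mul_Ioi (by linarith) t).const_mul _)
          ((ae_restrict_mem measurableSet_Ioi).mono fun s hs =>
            norm_exp_sub_smul_apply_le_of_le hB hg ht (le_of_lt hs))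
    _ = c / (β - σ) * exp (σ * t) := by
        have hβσ : β - σ ≠ 0 := by linarith
        rw [integral_const_mul, integral_exp_mul_Ioi (by linarith), ← neg_sub β σ,
          show σ * t = β * t + (σ - β) * t by ring, exp_add]
        field_simp
        ring_nf

end DecayEstimates

theorem ContinuousOn.primitive_Ici {E : Type*} [NormedAddCommGroup E] [NormedSpace ℝ E]
    {f : ℝ → E} (hf : ContinuousOn f (Ici 0)) :
    ContinuousOn (fun t => ∫ s in (0:ℝ)..t, f s) (Ici 0) := by
  intro t ht
  have hIcc : ContinuousOn (fun t => ∫ s in (0:ℝ)..t, f s) (Icc 0 (t + 1)) :=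
    intervalIntegral.continuousOn_primitive_interval'
      ((hf.mono Icc_subset_Ici_self).intervalIntegrable_of_Icc (by linarith [ht.out]))
      (by simp) |>.mono Icc_subset_uIcc
  refine (hIcc t ⟨ht, by linarith⟩).mono_of_mem_nhdsWithin ?_
  rw [← Ici_inter_Iic]
  exact Filter.inter_mem self_mem_nhdsWithin
    (mem_nhdsWithin_of_mem_nhds (Iic_mem_nhds (lt_add_one t)))

section LyapunovPerron

variable {E₁ E₂ : Type*} [NormedAddCommGroup E₁] [NormedSpace ℝ E₁]
  [NormedAddCommGroup E₂] [NormedSpace ℝ E₂] {A : E₁ →L[ℝ] E₁} {B : E₂ →L[ℝ] E₂}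
  {α β σ c : ℝ} {g₁ : ℝ → E₁} {g₂ : ℝ → E₂}

/-- `Tmap A B F G z z₀ φ x` unfolds to `lyapunovPerron A B x g₁ g₂` with the forcing terms
`g₁ s = F (φ s + z s z₀) - F (z s z₀)` and `g₂ s = G (φ s + z s z₀) - G (z s z₀)`. -/
def lyapunovPerron (A : E₁ →L[ℝ] E₁) (B : E₂ →L[ℝ] E₂) (x : E₁) (g₁ : ℝ → E₁) (g₂ : ℝ → E₂)
    (t : ℝ) : E₁ × E₂ :=
  (NormedSpace.exp (t • A) x + ∫ s in (0:ℝ)..t, NormedSpace.exp ((t - s) • A) (g₁ s),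
    -∫ s in Ioi t, NormedSpace.exp ((t - s) • B) (g₂ s))

theorem continuousOn_lyapunovPerron [CompleteSpace E₁] [CompleteSpace E₂]
    (hB : ∀ t : ℝ, 0 ≤ t → ‖NormedSpace.exp ((-t) • B)‖ ≤ exp (-(β * t))) (hσβ : σ < β)
    (x : E₁) (hg₁c : ContinuousOn g₁ (Ici 0)) (hg₂c : ContinuousOn g₂ (Ici 0))
    (hg₂ : ∀ s, 0 ≤ s → ‖g₂ s‖ ≤ c * exp (σ * s)) :
    ContinuousOn (lyapunovPerron A B x g₁ g₂) (Ici 0) := by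
  set h₁ := fun s => NormedSpace.exp ((-s) • A) (g₁ s)
  set h₂ := fun s => NormedSpace.exp ((-s) • B) (g₂ s)
  have hh₁ : ContinuousOn h₁ (Ici 0) := by simpa [h₁] using hg₁c.exp_sub_smul_apply (A := A) 0
  have hh₂ : ContinuousOn h₂ (Ici 0) := by simpa [h₂] using hg₂c.exp_sub_smul_apply (A := B) 0
  have hint : IntegrableOn h₂ (Ioi 0) := by
    simpa [h₂] using integrableOn_Ioi_exp_sub_smul_apply hB hσβ hg₂c hg₂ le_rfl
  have hfst : EqOn (fun t => NormedSpace.exp (t • A) (x + ∫ s in (0:ℝ)..t, h₁ s))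
      (fun t => (lyapunovPerron A B x g₁ g₂ t).1) (Ici 0) := fun t ht => by
    dsimp only
    rw [map_add, ← ContinuousLinearMap.intervalIntegral_comp_comm _
      ((hh₁.mono Icc_subset_Ici_self).intervalIntegrable_of_Icc ht.out)]
    simp only [lyapunovPerron, exp_sub_smul_apply _ t, h₁]
  have hsnd : EqOn
      (fun t => -NormedSpace.exp (t • B) ((∫ s in Ioi 0, h₂ s) - ∫ s in (0:ℝ)..t, h₂ s))
      (fun t => (lyapunovPerron A B x g₁ g₂ t).2) (Ici 0) := fun t ht => by
    dsimp only
    rw [← intervalIntegral.integral_Ioi_sub_Ioi hint ht.out, sub_sub_cancel,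
      ← ContinuousLinearMap.integral_comp_comm _ (hint.mono_set (Ioi_subset_Ioi ht.out))]
    simp only [lyapunovPerron, exp_sub_smul_apply _ t, h₂]
  exact ((((continuous_exp_smul A).continuousOn).clm_apply
      (continuousOn_const.add hh₁.primitive_Ici)).congr hfst.symm).prodMk
    ((((continuous_exp_smul B).continuousOn).clm_apply
      (continuousOn_const.sub hh₂.primitive_Ici)).neg.congr hsnd.symm)

theorem norm_lyapunovPerron_le
    (hA : ∀ t : ℝ, 0 ≤ t → ‖NormedSpace.exp (t • A)‖ ≤ exp (α * t))
    (hB : ∀ t : ℝ, 0 ≤ t → ‖NormedSpace.exp ((-t) • B)‖ ≤ exp (-(β * t)))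
    (hασ : α < σ) (hσβ : σ < β) (x : E₁)
    (hg₁ : ∀ s, 0 ≤ s → ‖g₁ s‖ ≤ c * exp (σ * s)) (hg₂ : ∀ s, 0 ≤ s → ‖g₂ s‖ ≤ c * exp (σ * s))
    {t : ℝ} (ht : 0 ≤ t) :
    ‖lyapunovPerron A B x g₁ g₂ t‖ ≤ (‖x‖ + max (c / (σ - α)) (c / (β - σ))) * exp (σ * t) := by
  have hx : ‖NormedSpace.exp (t • A) x‖ ≤ ‖x‖ * exp (σ * t) :=
    calc ‖NormedSpace.exp (t • A) x‖ ≤ exp (α * t) * ‖x‖ :=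
          (ContinuousLinearMap.le_opNorm _ _).trans (by gcongr; exact hA t ht)
      _ ≤ ‖x‖ * exp (σ * t) := by rw [mul_comm]; gcongr
  have h₁ := norm_intervalIntegral_exp_sub_smul_le hA hασ hg₁ ht
  have h₂ := norm_setIntegral_Ioi_exp_sub_smul_le hB hσβ hg₂ ht
  have hm₂ : c / (β - σ) * exp (σ * t) ≤ max (c / (σ - α)) (c / (β - σ)) * exp (σ * t) := by
    gcongr; exact le_max_right _ _
  refine norm_prod_le_iff.2 ⟨(norm_add_le _ _).trans ?_, ?_⟩ <;>
    simp only [lyapunovPerron, norm_neg, add_mul]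
  · exact add_le_add hx (h₁.trans (by gcongr; exact le_max_left _ _))
  · linarith [mul_nonneg (norm_nonneg x) (exp_pos (σ * t)).le]

theorem lyapunovPerron_sub {x x' : E₁} {g₁' : ℝ → E₁} {g₂' : ℝ → E₂} {t : ℝ}
    (h₁ : IntervalIntegrable (fun s => NormedSpace.exp ((t - s) • A) (g₁ s)) volume 0 t)
    (h₁' : IntervalIntegrable (fun s => NormedSpace.exp ((t - s) • A) (g₁' s)) volume 0 t)
    (h₂ : IntegrableOn (fun s => NormedSpace.exp ((t - s) • B) (g₂ s)) (Ioi t))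
    (h₂' : IntegrableOn (fun s => NormedSpace.exp ((t - s) • B) (g₂' s)) (Ioi t)) :
    lyapunovPerron A B x g₁ g₂ t - lyapunovPerron A B x' g₁' g₂' t =
      lyapunovPerron A B (x - x') (fun s => g₁ s - g₁' s) (fun s => g₂ s - g₂' s) t := by
  simp only [lyapunovPerron, map_sub, Prod.mk_sub_mk, intervalIntegral.integral_sub h₁ h₁',
    integral_sub h₂ h₂']
  congr 1 <;> abel

end LyapunovPerron

section Forcing

variable {E : Type*} [NormedAddCommGroup E] {E' : Type*} [NormedAddCommGroup E']
  {f : E → E'} {K : ℝ≥0} {σ : ℝ} {φ ψ : ℝ → E}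

theorem ContinuousOn.forcing {w : ℝ → E} (hf : Continuous f) (hw : Continuous w)
    (hφ : ContinuousOn φ (Ici 0)) :
    ContinuousOn (fun s => f (φ s + w s) - f (w s)) (Ici 0) :=
  (hf.comp_continuousOn (hφ.add hw.continuousOn)).sub (hf.comp hw).continuousOn

theorem norm_forcing_le (hf : LipschitzWith K f) (hφψ : memFsigma σ fun t => φ t - ψ t)
    (w : ℝ → E) {s : ℝ} (hs : 0 ≤ s) :
    ‖f (φ s + w s) - f (ψ s + w s)‖ ≤ K * normSigmaPos σ (fun t => φ t - ψ t) * exp (σ * s) := by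
  rw [mul_assoc]
  refine (hf.norm_sub_le _ _).trans ?_
  rw [add_sub_add_right_eq_sub]
  gcongr
  exact hφψ.norm_le hs

theorem memFsigma.norm_forcing_le (hf : LipschitzWith K f) (hφ : memFsigma σ φ)
    (w : ℝ → E) {s : ℝ} (hs : 0 ≤ s) :
    ‖f (φ s + w s) - f (w s)‖ ≤ K * normSigmaPos σ φ * exp (σ * s) := by
  simpa using _root_.norm_forcing_le hf (ψ := 0) (by simpa using hφ) w hs

end Forcing

section LyapunovPerronIteration

variable {A : X →L[ℝ] X} {B : Y →L[ℝ] Y} {F : X × Y → X} {G : X × Y → Y}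
  {z : ℝ → X × Y → X × Y} {z₀ : X × Y} {α β σ : ℝ} {K : ℝ≥0} {φ φ₁ φ₂ : ℝ → X × Y}

theorem memFsigma_Tmap (hA : ∀ t : ℝ, 0 ≤ t → ‖NormedSpace.exp (t • A)‖ ≤ exp (α * t))
    (hB : ∀ t : ℝ, 0 ≤ t → ‖NormedSpace.exp ((-t) • B)‖ ≤ exp (-(β * t)))
    (hασ : α < σ) (hσβ : σ < β) (hF : LipschitzWith K F) (hG : LipschitzWith K G)
    (hz : Continuous fun s => z s z₀) (hφ : memFsigma σ φ) (x : X) :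
    memFsigma σ (Tmap A B F G z z₀ φ x) :=
  memFsigma_of_norm_le
    (continuousOn_lyapunovPerron hB hσβ x (hφ.1.forcing hF.continuous hz)
      (hφ.1.forcing hG.continuous hz) fun _ hs => hφ.norm_forcing_le hG (z · z₀) hs)
    fun _ ht => norm_lyapunovPerron_le hA hB hασ hσβ x
      (fun _ hs => hφ.norm_forcing_le hF (z · z₀) hs)
      (fun _ hs => hφ.norm_forcing_le hG (z · z₀) hs) ht

theorem Tmap_sub_Tmap (hB : ∀ t : ℝ, 0 ≤ t → ‖NormedSpace.exp ((-t) • B)‖ ≤ exp (-(β * t)))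
    (hσβ : σ < β) (hF : Continuous F) (hG : LipschitzWith K G)
    (hz : Continuous fun s => z s z₀) (hφ₁ : memFsigma σ φ₁) (hφ₂ : memFsigma σ φ₂)
    (x₁ x₂ : X) {t : ℝ} (ht : 0 ≤ t) :
    Tmap A B F G z z₀ φ₁ x₁ t - Tmap A B F G z z₀ φ₂ x₂ t =
      lyapunovPerron A B (x₁ - x₂) (fun s => F (φ₁ s + z s z₀) - F (φ₂ s + z s z₀))
        (fun s => G (φ₁ s + z s z₀) - G (φ₂ s + z s z₀)) t := by
  refine (lyapunovPerron_sub
    (intervalIntegrable_exp_sub_smul_apply A (hφ₁.1.forcing hF hz) ht)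
    (intervalIntegrable_exp_sub_smul_apply A (hφ₂.1.forcing hF hz) ht)
    (integrableOn_Ioi_exp_sub_smul_apply hB hσβ (hφ₁.1.forcing hG.continuous hz)
      (fun _ hs => hφ₁.norm_forcing_le hG (z · z₀) hs) ht)
    (integrableOn_Ioi_exp_sub_smul_apply hB hσβ (hφ₂.1.forcing hG.continuous hz)
      (fun _ hs => hφ₂.norm_forcing_le hG (z · z₀) hs) ht)).trans ?_
  simp only [sub_sub_sub_cancel_right]

theorem normSigmaPos_Tmap_sub_le
    (hA : ∀ t : ℝ, 0 ≤ t → ‖NormedSpace.exp (t • A)‖ ≤ exp (α * t))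
    (hB : ∀ t : ℝ, 0 ≤ t → ‖NormedSpace.exp ((-t) • B)‖ ≤ exp (-(β * t)))
    (hασ : α < σ) (hσβ : σ < β) (hF : LipschitzWith K F) (hG : LipschitzWith K G)
    (hz : Continuous fun s => z s z₀) (hφ₁ : memFsigma σ φ₁) (hφ₂ : memFsigma σ φ₂)
    (x₁ x₂ : X) :
    normSigmaPos σ (fun t => Tmap A B F G z z₀ φ₁ x₁ t - Tmap A B F G z z₀ φ₂ x₂ t) ≤
      ‖x₁ - x₂‖ + max (K / (σ - α)) (K / (β - σ)) * normSigmaPos σ (fun t => φ₁ t - φ₂ t) := by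
  have hφ₁₂ := hφ₁.sub hφ₂
  have hmax : 0 ≤ max ((K : ℝ) / (σ - α)) (K / (β - σ)) :=
    le_max_of_le_left (div_nonneg K.2 (by linarith))
  refine normSigmaPos_le (add_nonneg (norm_nonneg _) (mul_nonneg hmax (normSigmaPos_nonneg _ _)))
    fun t ht => ?_
  rw [Tmap_sub_Tmap hB hσβ hF.continuous hG hz hφ₁ hφ₂ x₁ x₂ ht]
  refine (norm_lyapunovPerron_le hA hB hασ hσβ (x₁ - x₂)
    (fun _ hs => norm_forcing_le hF hφ₁₂ (z · z₀) hs)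
    (fun _ hs => norm_forcing_le hG hφ₁₂ (z · z₀) hs) ht).trans_eq ?_
  rw [max_mul_of_nonneg _ _ (normSigmaPos_nonneg _ _), mul_div_right_comm, mul_div_right_comm]

end LyapunovPerronIteration

theorem norm_exp_smul_prod_zero_le {E₁ E₂ : Type*} [NormedAddCommGroup E₁] [NormedSpace ℝ E₁]
    [NormedAddCommGroup E₂] {α σ : ℝ} (hασ : α ≤ σ) (v : E₁) {t : ℝ} (ht : 0 ≤ t) :
    ‖((exp (α * t) • v, (0 : E₂)) : E₁ × E₂)‖ ≤ ‖v‖ * exp (σ * t) := by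
  rw [Prod.norm_mk, norm_zero, max_eq_left (norm_nonneg _), norm_smul, norm_of_nonneg
    (exp_pos _).le, mul_comm]
  gcongr

section InitialIterate

variable {E₁ E₂ : Type*} [NormedAddCommGroup E₁] [NormedSpace ℝ E₁]
  [NormedAddCommGroup E₂] [NormedSpace ℝ E₂] {A : E₁ →L[ℝ] E₁} {B : E₂ →L[ℝ] E₂}
  {F : E₁ × E₂ → E₁} {G : E₁ × E₂ → E₂} {z : ℝ → E₁ × E₂ → E₁ × E₂} {z₀ : E₁ × E₂} {α σ : ℝ}

theorem memFsigma_phiIter_zero (hασ : α ≤ σ) (x : E₁) :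
    memFsigma σ (phiIter A B F G z z₀ α 0 x) :=
  memFsigma_of_norm_le (Continuous.continuousOn (by simp only [phiIter]; fun_prop))
    fun _ ht => norm_exp_smul_prod_zero_le hασ _ ht

theorem normSigmaPos_phiIter_zero_sub_le (hασ : α ≤ σ) (x₁ x₂ : E₁) :
    normSigmaPos σ (fun t => phiIter A B F G z z₀ α 0 x₁ t - phiIter A B F G z z₀ α 0 x₂ t) ≤
      ‖x₁ - x₂‖ := by
  refine normSigmaPos_le (norm_nonneg _) fun t ht => ?_
  simp only [phiIter, Prod.mk_sub_mk, ← smul_sub, sub_sub_sub_cancel_right, sub_zero]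
  exact norm_exp_smul_prod_zero_le hασ _ ht

end InitialIterate

theorem iterates_lipschitz_in_x_general
    {X Y : Type*} [NormedAddCommGroup X] [NormedSpace ℝ X] [CompleteSpace X]
    [NormedAddCommGroup Y] [NormedSpace ℝ Y] [CompleteSpace Y]
(A : X →L[ℝ] X) (B : Y →L[ℝ] Y) (α β δ σ κ : ℝ)
    (F : X × Y → X) (G : X × Y → Y)
    (z : ℝ → X × Y → X × Y) (z₀ : X × Y)
    (hA : ∀ t : ℝ, 0 ≤ t → ‖NormedSpace.exp (t • A)‖ ≤ Real.exp (α * t))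
    (hB : ∀ t : ℝ, 0 ≤ t → ‖NormedSpace.exp ((-t) • B)‖ ≤ Real.exp (-(β * t)))
    (hδ : 0 ≤ δ)
    (hLip : ∀ w₁ w₂ : X × Y, ‖((F w₁, G w₁) : X × Y) - (F w₂, G w₂)‖ ≤ δ * ‖w₁ - w₂‖)
    (hode : ∀ (w : X × Y) (t : ℝ),
      HasDerivAt (fun τ => z τ w)
        (((A (z t w).1, B (z t w).2) : X × Y) + (F (z t w), G (z t w))) t)
    (hσ : σ ∈ Set.Ioo (α + δ) (β - δ))
    (hκ : κ = max (δ / (β - σ)) (δ / (σ - α))) :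
    ∀ j : ℕ,
      (∀ x : X, memFsigma σ (phiIter A B F G z z₀ α j x)) ∧
      (∀ x₁ x₂ : X,
        normSigmaPos σ
            (fun t => phiIter A B F G z z₀ α j x₁ t - phiIter A B F G z z₀ α j x₂ t)
          ≤ 1 / (1 - κ) * ‖x₁ - x₂‖) := by
  obtain ⟨hασ, hσβ⟩ : α < σ ∧ σ < β := ⟨by linarith [hσ.1], by linarith [hσ.2]⟩
  have hκ1 : κ < 1 := hκ ▸ max_lt ((div_lt_one (by linarith)).2 (by linarith [hσ.2]))
    ((div_lt_one (by linarith)).2 (by linarith [hσ.1]))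
  have h1κ : 1 - κ ≠ 0 := by linarith
  have hκ0 : 0 ≤ κ := hκ ▸ le_max_of_le_left (div_nonneg hδ (by linarith))
  set K : ℝ≥0 := ⟨δ, hδ⟩
  have hH : LipschitzWith K fun w => (F w, G w) := lipschitzWith_iff_norm_sub_le.2 hLip
  have hF : LipschitzWith K F := by simpa [Function.comp_def] using LipschitzWith.prod_fst.comp hH
  have hG : LipschitzWith K G := by simpa [Function.comp_def] using LipschitzWith.prod_snd.comp hH
  have hz : Continuous fun s => z s z₀ :=
    continuous_iff_continuousAt.2 fun t => (hode z₀ t).continuousAt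
  intro j
  induction j with
  | zero =>
    refine ⟨memFsigma_phiIter_zero hασ.le, fun x₁ x₂ => ?_⟩
    exact (normSigmaPos_phiIter_zero_sub_le hασ.le x₁ x₂).trans
      (le_mul_of_one_le_left (norm_nonneg _) (one_le_one_div (by linarith) (by linarith)))
  | succ j ih =>
    obtain ⟨hmem, hlip⟩ := ih
    refine ⟨fun x => memFsigma_Tmap hA hB hασ hσβ hF hG hz (hmem x) x, fun x₁ x₂ => ?_⟩
    calc _ ≤ ‖x₁ - x₂‖ + κ * normSigmaPos σ
            (fun t => phiIter A B F G z z₀ α j x₁ t - phiIter A B F G z z₀ α j x₂ t) :=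
          (normSigmaPos_Tmap_sub_le hA hB hασ hσβ hF hG hz (hmem x₁) (hmem x₂) x₁ x₂).trans_eq
            (by rw [hκ, max_comm]; rfl)
      _ ≤ ‖x₁ - x₂‖ + κ * (1 / (1 - κ) * ‖x₁ - x₂‖) := by gcongr; exact hlip x₁ x₂
      _ = 1 / (1 - κ) * ‖x₁ - x₂‖ := by field_simp; ring

/-- **Lipschitz dependence of the iterates on x.** -/
theorem iterates_lipschitz_in_x
    {X Y : Type*} [NormedAddCommGroup X] [NormedSpace ℝ X] [CompleteSpace X]
    [NormedAddCommGroup Y] [NormedSpace ℝ Y] [CompleteSpace Y]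
(A : X →L[ℝ] X) (B : Y →L[ℝ] Y) (α β δ σ κ : ℝ)
    (F : X × Y → X) (G : X × Y → Y)
    (z : ℝ → X × Y → X × Y) (z₀ : X × Y)
    (hA : ∀ t : ℝ, 0 ≤ t → ‖NormedSpace.exp (t • A)‖ ≤ Real.exp (α * t))
    (hB : ∀ t : ℝ, 0 ≤ t → ‖NormedSpace.exp ((-t) • B)‖ ≤ Real.exp (-(β * t)))
    (hδ : 0 ≤ δ)
    (hLip : ∀ w₁ w₂ : X × Y, ‖((F w₁, G w₁) : X × Y) - (F w₂, G w₂)‖ ≤ δ * ‖w₁ - w₂‖)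
    (hH0 : ((F 0, G 0) : X × Y) = 0)
    (hgap : 2 * δ < β - α)
    (hz0 : ∀ w : X × Y, z 0 w = w)
    (hode : ∀ (w : X × Y) (t : ℝ),
      HasDerivAt (fun τ => z τ w)
        (((A (z t w).1, B (z t w).2) : X × Y) + (F (z t w), G (z t w))) t)
    (hσ : σ ∈ Set.Ioo (α + δ) (β - δ))
    (hκ : κ = max (δ / (β - σ)) (δ / (σ - α))) :
    ∀ j : ℕ,
      (∀ x : X, memFsigma σ (phiIter A B F G z z₀ α j x)) ∧
      (∀ x₁ x₂ : X,
        normSigmaPos σ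
            (fun t => phiIter A B F G z z₀ α j x₁ t - phiIter A B F G z z₀ α j x₂ t)
          ≤ 1 / (1 - κ) * ‖x₁ - x₂‖) :=
  iterates_lipschitz_in_x_general A B α β δ σ κ F G z z₀ hA hB hδ hLip hode hσ hκ
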